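/- Let y^{(j)} = F(m ∘ W c^{(j)}), j = 0,...,N_c-1, with 2L < N, and suppose the matrix V_m = (ω_N^{-n·ℓ})_{n∈S_N(m), ℓ∈Λ_{2L-1}} has full column rank (2L-1)², where S_N(m) is the set of indices n with m_n ≠ 0. If v = (v^{(0)},...,v^{(N_c-1)}) is any vector in the nullspace of the MOCCA matrix A_N, then the associated bivariate Laurent polynomials satisfy c^{(j)}(z)·Σ_{ℓ≠j} v^{(ℓ)}(z) = v^{(j)}(z)·Σ_{ℓ≠j} c^{(ℓ)}(z) identically for all z = (z₁,z₂) with z₁,z₂ ≠ 0 and all j. -/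

import Mathlib

open Complex Matrix BigOperators Finset

noncomputable def omegaN (N : ℕ) : ℂ := Complex.exp (-2 * Real.pi * Complex.I / N)

/-- ω_N raised to an exponent given modulo N. -/
noncomputable def eN (N : ℕ) (x : ZMod N) : ℂ := omegaN N ^ x.val

/-- The centered 2D DFT matrix F = (ω_N^{ν·n}) indexed by (ZMod N)², which
realizes the index set Λ_N = {-N/2,…,N/2-1}² with periodic wrapping. -/
noncomputable def dft2 (N : ℕ) [NeZero N] :
    Matrix (ZMod N × ZMod N) (ZMod N × ZMod N) ℂ :=
  Matrix.of fun ν n => eN N (ν.1 * n.1 + ν.2 * n.2)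

/-- Centering map identifying Fin L with {-n,…,n} ⊂ ZMod N (L = 2n+1). -/
def cenM (N L : ℕ) (i : Fin L) : ZMod N := ((i : ℕ) : ZMod N) - (((L - 1) / 2 : ℕ) : ZMod N)

/-- (W a)_x = Σ_{r ∈ Λ_L} a_r ω_N^{-r·x}, the trigonometric-polynomial model map. -/
noncomputable def Wmap (N L : ℕ) (a : Fin L × Fin L → ℂ) (x : ZMod N × ZMod N) : ℂ :=
  ∑ r : Fin L × Fin L, a r * eN N (-(cenM N L r.1 * x.1 + cenM N L r.2 * x.2))

/-- The cyclic-shift (block Hankel) matrix Y⁽ʲ⁾ = (y_{(ν-r) mod Λ_N}). -/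
noncomputable def Yshift (N L : ℕ) (y : ZMod N × ZMod N → ℂ) :
    Matrix (ZMod N × ZMod N) (Fin L × Fin L) ℂ :=
  Matrix.of fun ν r => y (ν.1 - cenM N L r.1, ν.2 - cenM N L r.2)

/-- The MOCCA matrix A_N with (j,j)-block -(Σ_{ℓ≠j} Y⁽ˡ⁾) and (j,ℓ)-block Y⁽ʲ⁾ for ℓ≠j. -/
noncomputable def moccaA (N L Nc : ℕ) (y : Fin Nc → ZMod N × ZMod N → ℂ) :
    Matrix (Fin Nc × (ZMod N × ZMod N)) (Fin Nc × (Fin L × Fin L)) ℂ :=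
  Matrix.of fun p q =>
    if q.1 = p.1 then -(∑ ℓ ∈ Finset.univ.erase p.1, Yshift N L (y ℓ) p.2 q.2)
    else Yshift N L (y p.1) p.2 q.2


/-- The bivariate Laurent polynomial with coefficients supported on Λ_K = {-(K-1)/2,…,(K-1)/2}². -/
noncomputable def lpz (K : ℕ) (a : Fin K × Fin K → ℂ) (z : ℂ × ℂ) : ℂ :=
  ∑ r : Fin K × Fin K,
    a r * z.1 ^ (((r.1 : ℕ) : ℤ) - ((K : ℤ) - 1) / 2) *
      z.2 ^ (((r.2 : ℕ) : ℤ) - ((K : ℤ) - 1) / 2)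

/-!
Convolving coefficient arrays multiplies both the trigonometric polynomials `Wmap` and the
Laurent polynomials `lpz`; for `L` odd the centred index sets `Λ_L + Λ_L = Λ_{2L-1}` line up, so no
extra monomial factor appears. A shift matrix built from `y = F g` acts on `w` as
`Yshift (F g) w = F (g · W w)`, hence the `j`-th block row of `A_N v = 0` says that the 2D DFT of
`m · (W c⁽ʲ⁾ · W ṽ - W c̃ · W v⁽ʲ⁾)` vanishes, where `ṽ`, `c̃` are the sums over `ℓ ≠ j`.
Inverting the DFT, the trigonometric polynomial of the array `c⁽ʲ⁾ ∗ ṽ - c̃ ∗ v⁽ʲ⁾` vanishes on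
`S_N(m)`, so the rank hypothesis kills the array, and evaluating its Laurent polynomial gives the
identity.
-/

section Fourier

open ZMod

variable {N : ℕ} [NeZero N]

lemma eN_eq_stdAddChar_neg (u : ZMod N) : eN N u = stdAddChar (-u) := by
  rw [eN, omegaN, ← Complex.exp_nat_mul, AddChar.map_neg_eq_inv, stdAddChar_apply, toCircle_apply,
    ← Complex.exp_neg]
  ring_nf

lemma eN_add (u w : ZMod N) : eN N (u + w) = eN N u * eN N w := by
  simp only [eN_eq_stdAddChar_neg, neg_add, AddChar.map_add_eq_mul]

lemma dft2_mulVec_apply (g : ZMod N × ZMod N → ℂ) (ν : ZMod N × ZMod N) :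
    (dft2 N *ᵥ g) ν = 𝓕 (fun x₁ ↦ 𝓕 (fun x₂ ↦ g (x₁, x₂))) ν.1 ν.2 := by
  simp only [mulVec, dotProduct, dft2, of_apply, dft_apply, Fintype.sum_prod_type, eN_add,
    mul_comm ν.1, mul_comm ν.2, Finset.sum_apply, Pi.smul_apply, smul_eq_mul, Finset.mul_sum,
    mul_assoc]
  simp only [eN_eq_stdAddChar_neg]

lemma eq_zero_of_dft2_mulVec_eq_zero {g : ZMod N × ZMod N → ℂ} (hg : dft2 N *ᵥ g = 0) :
    g = 0 := by
  have hrows : 𝓕 (fun x₁ ↦ 𝓕 (fun x₂ ↦ g (x₁, x₂))) = 0 := by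
    ext ν₁ ν₂
    simpa [dft2_mulVec_apply] using congrFun hg (ν₁, ν₂)
  ext ⟨x₁, x₂⟩
  have hrow : 𝓕 (fun x₂ ↦ g (x₁, x₂)) = 0 := congrFun (dft.map_eq_zero_iff.1 hrows) x₁
  exact congrFun (dft.map_eq_zero_iff.1 hrow) x₂

end Fourier

section Linearity

variable {ι : Type*} (s : Finset ι)

lemma Wmap_sum (N L : ℕ) (a : ι → Fin L × Fin L → ℂ) :
    Wmap N L (∑ i ∈ s, a i) = ∑ i ∈ s, Wmap N L (a i) := by
  ext x
  simp only [Wmap, Finset.sum_apply, Finset.sum_mul]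
  exact Finset.sum_comm

lemma Wmap_sub (N L : ℕ) (a b : Fin L × Fin L → ℂ) :
    Wmap N L (a - b) = Wmap N L a - Wmap N L b := by
  ext x
  simp only [Wmap, Pi.sub_apply, sub_mul, Finset.sum_sub_distrib]

lemma lpz_sum (K : ℕ) (a : ι → Fin K × Fin K → ℂ) (z : ℂ × ℂ) :
    lpz K (∑ i ∈ s, a i) z = ∑ i ∈ s, lpz K (a i) z := by
  simp only [lpz, Finset.sum_apply, Finset.sum_mul]
  exact Finset.sum_comm

lemma Yshift_sum (N L : ℕ) (y : ι → ZMod N × ZMod N → ℂ) :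
    Yshift N L (∑ i ∈ s, y i) = ∑ i ∈ s, Yshift N L (y i) := by
  ext ν r
  simp only [Yshift, of_apply, Finset.sum_apply, Matrix.sum_apply]

end Linearity

lemma Yshift_dft2_mulVec {N : ℕ} [NeZero N] (L : ℕ) (g : ZMod N × ZMod N → ℂ)
    (w : Fin L × Fin L → ℂ) :
    Yshift N L (dft2 N *ᵥ g) *ᵥ w = dft2 N *ᵥ (g * Wmap N L w) := by
  ext ν
  simp only [Yshift, dft2, mulVec, dotProduct, of_apply, Wmap, Pi.mul_apply, Finset.mul_sum,
    Finset.sum_mul]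
  rw [Finset.sum_comm]
  refine Finset.sum_congr rfl fun x _ ↦ Finset.sum_congr rfl fun r _ ↦ ?_
  rw [show (ν.1 - cenM N L r.1) * x.1 + (ν.2 - cenM N L r.2) * x.2
    = (ν.1 * x.1 + ν.2 * x.2) + -(cenM N L r.1 * x.1 + cenM N L r.2 * x.2) by ring, eN_add]
  ring

lemma moccaA_mulVec_apply (N L Nc : ℕ) (y : Fin Nc → ZMod N × ZMod N → ℂ)
    (v : Fin Nc → Fin L × Fin L → ℂ) (j : Fin Nc) (ν : ZMod N × ZMod N) :
    (moccaA N L Nc y *ᵥ fun q ↦ v q.1 q.2) (j, ν) =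
      (Yshift N L (y j) *ᵥ ∑ ℓ ∈ univ.erase j, v ℓ) ν
        - ((∑ ℓ ∈ univ.erase j, Yshift N L (y ℓ)) *ᵥ v j) ν := by
  simp only [mulVec, dotProduct]
  rw [Fintype.sum_prod_type, ← Finset.add_sum_erase _ _ (mem_univ j), add_comm, sub_eq_add_neg]
  simp only [moccaA, of_apply, if_pos, Matrix.sum_apply, neg_mul, Finset.sum_neg_distrib]
  congr 1
  rw [Finset.sum_comm]
  refine Finset.sum_congr rfl fun r _ ↦ ?_
  rw [Finset.sum_apply, Finset.mul_sum]
  refine Finset.sum_congr rfl fun ℓ hℓ ↦ ?_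
  rw [if_neg (Finset.ne_of_mem_erase hℓ)]

section Convolution

variable {L : ℕ}

def pairAdd (r r' : Fin L × Fin L) : Fin (2 * L - 1) × Fin (2 * L - 1) :=
  (⟨r.1 + r'.1, by omega⟩, ⟨r.2 + r'.2, by omega⟩)

noncomputable def coeffConv (a b : Fin L × Fin L → ℂ) (s : Fin (2 * L - 1) × Fin (2 * L - 1)) :
    ℂ :=
  ∑ r, ∑ r', if pairAdd r r' = s then a r * b r' else 0

lemma sum_coeffConv_mul (a b : Fin L × Fin L → ℂ) (X : Fin (2 * L - 1) × Fin (2 * L - 1) → ℂ) :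
    ∑ s, coeffConv a b s * X s = ∑ r, ∑ r', a r * b r' * X (pairAdd r r') := by
  simp only [coeffConv, Finset.sum_mul, ite_mul, zero_mul]
  rw [Finset.sum_comm]
  refine Finset.sum_congr rfl fun r _ ↦ ?_
  rw [Finset.sum_comm]
  exact Finset.sum_congr rfl fun r' _ ↦ Fintype.sum_ite_eq _ _

variable (hL : Odd L)
include hL

lemma cenM_pairAdd (N : ℕ) (r r' : Fin L × Fin L) :
    cenM N (2 * L - 1) (pairAdd r r').1 = cenM N L r.1 + cenM N L r'.1 ∧
      cenM N (2 * L - 1) (pairAdd r r').2 = cenM N L r.2 + cenM N L r'.2 := by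
  obtain ⟨k, rfl⟩ := hL
  have hcenter : (2 * (2 * k + 1) - 1 - 1) / 2 = k + k := by omega
  simp only [cenM, pairAdd, hcenter, show (2 * k + 1 - 1) / 2 = k by omega]
  push_cast
  constructor <;> ring

lemma Wmap_coeffConv (N : ℕ) [NeZero N] (a b : Fin L × Fin L → ℂ) :
    Wmap N (2 * L - 1) (coeffConv a b) = Wmap N L a * Wmap N L b := by
  ext x
  rw [Pi.mul_apply, Wmap, sum_coeffConv_mul, Wmap, Wmap, Finset.sum_mul_sum]
  refine Finset.sum_congr rfl fun r _ ↦ Finset.sum_congr rfl fun r' _ ↦ ?_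
  obtain ⟨h₁, h₂⟩ := cenM_pairAdd hL N r r'
  rw [h₁, h₂, show -((cenM N L r.1 + cenM N L r'.1) * x.1 + (cenM N L r.2 + cenM N L r'.2) * x.2)
    = -(cenM N L r.1 * x.1 + cenM N L r.2 * x.2) + -(cenM N L r'.1 * x.1 + cenM N L r'.2 * x.2)
    by ring, eN_add]
  ring

lemma lpz_coeffConv (a b : Fin L × Fin L → ℂ) {z : ℂ × ℂ} (hz₁ : z.1 ≠ 0) (hz₂ : z.2 ≠ 0) :
    lpz (2 * L - 1) (coeffConv a b) z = lpz L a z * lpz L b z := by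
  have hexp : ∀ i i' : Fin L, (((i + i' : ℕ) : ℤ) - (((2 * L - 1 : ℕ) : ℤ) - 1) / 2)
      = (((i : ℕ) : ℤ) - ((L : ℤ) - 1) / 2) + (((i' : ℕ) : ℤ) - ((L : ℤ) - 1) / 2) := by
    obtain ⟨k, rfl⟩ := hL
    intro i i'
    push_cast
    omega
  simp only [lpz, mul_assoc]
  rw [sum_coeffConv_mul, Finset.sum_mul_sum]
  refine Finset.sum_congr rfl fun r _ ↦ Finset.sum_congr rfl fun r' _ ↦ ?_
  simp only [pairAdd, hexp, zpow_add₀ hz₁, zpow_add₀ hz₂]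
  ring

end Convolution

theorem stmt3_general (N L n Nc : ℕ) [NeZero N] (hL : L = 2 * n + 1)
    (m : ZMod N × ZMod N → ℂ) (c : Fin Nc → Fin L × Fin L → ℂ)
    (y : Fin Nc → ZMod N × ZMod N → ℂ)
    (hmodel : ∀ j, y j = (dft2 N).mulVec (fun x => m x * Wmap N L (c j) x))
    (hrank : ∀ a : Fin (2 * L - 1) × Fin (2 * L - 1) → ℂ,
      (∀ x : ZMod N × ZMod N, m x ≠ 0 → Wmap N (2 * L - 1) a x = 0) → a = 0)
    (v : Fin Nc → Fin L × Fin L → ℂ)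
    (hv : (moccaA N L Nc y).mulVec (fun q => v q.1 q.2) = 0)
    (j : Fin Nc) (z : ℂ × ℂ) (hz1 : z.1 ≠ 0) (hz2 : z.2 ≠ 0) :
    lpz L (c j) z * (∑ ℓ ∈ Finset.univ.erase j, lpz L (v ℓ) z) =
      lpz L (v j) z * (∑ ℓ ∈ Finset.univ.erase j, lpz L (c ℓ) z) := by
  have hodd : Odd L := ⟨n, hL⟩
  set vt := ∑ ℓ ∈ univ.erase j, v ℓ
  set ct := ∑ ℓ ∈ univ.erase j, c ℓ
  have hy : ∀ ℓ, y ℓ = dft2 N *ᵥ (m * Wmap N L (c ℓ)) := hmodel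
  have hy_sum : ∑ ℓ ∈ univ.erase j, y ℓ = dft2 N *ᵥ (m * Wmap N L ct) := by
    simp only [hy, ← mulVec_sum, ← Finset.mul_sum, ct, Wmap_sum]
  have hrow :
      dft2 N *ᵥ (m * (Wmap N L (c j) * Wmap N L vt - Wmap N L ct * Wmap N L (v j))) = 0 := by
    rw [mul_sub, mulVec_sub]
    ext ν
    have hrowν := congrFun hv (j, ν)
    rw [moccaA_mulVec_apply, ← Yshift_sum, hy_sum, hy j, Yshift_dft2_mulVec,
      Yshift_dft2_mulVec] at hrowν
    simpa only [mul_assoc, Pi.sub_apply, Pi.zero_apply] using hrowν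
  have hprod := eq_zero_of_dft2_mulVec_eq_zero hrow
  have hconv : coeffConv (c j) vt = coeffConv ct (v j) := by
    refine sub_eq_zero.1 (hrank _ fun x hx ↦ ?_)
    rw [Wmap_sub, Wmap_coeffConv hodd, Wmap_coeffConv hodd]
    exact (mul_eq_zero.1 (congrFun hprod x)).resolve_left hx
  have hlpz := congrArg (lpz (2 * L - 1) · z) hconv
  simp only [lpz_coeffConv hodd _ _ hz1 hz2] at hlpz
  rw [← lpz_sum, ← lpz_sum, hlpz, mul_comm]

/-- If V_m has full column rank (2L-1)², then any nullspace vector v of the MOCCA matrix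
satisfies the Laurent polynomial relations c⁽ʲ⁾·Σ_{ℓ≠j}v⁽ˡ⁾ = v⁽ʲ⁾·Σ_{ℓ≠j}c⁽ˡ⁾ on (ℂ∖{0})². -/
theorem stmt3 (N L n Nc : ℕ) [NeZero N] (hN : Even N) (hL : L = 2 * n + 1) (h2L : 2 * L < N)
    (m : ZMod N × ZMod N → ℂ) (c : Fin Nc → Fin L × Fin L → ℂ)
    (y : Fin Nc → ZMod N × ZMod N → ℂ)
    (hmodel : ∀ j, y j = (dft2 N).mulVec (fun x => m x * Wmap N L (c j) x))
    (hrank : ∀ a : Fin (2 * L - 1) × Fin (2 * L - 1) → ℂ,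
      (∀ x : ZMod N × ZMod N, m x ≠ 0 → Wmap N (2 * L - 1) a x = 0) → a = 0)
    (v : Fin Nc → Fin L × Fin L → ℂ)
    (hv : (moccaA N L Nc y).mulVec (fun q => v q.1 q.2) = 0)
    (j : Fin Nc) (z : ℂ × ℂ) (hz1 : z.1 ≠ 0) (hz2 : z.2 ≠ 0) :
    lpz L (c j) z * (∑ ℓ ∈ Finset.univ.erase j, lpz L (v ℓ) z) =
      lpz L (v j) z * (∑ ℓ ∈ Finset.univ.erase j, lpz L (c ℓ) z) :=
  stmt3_general N L n Nc hL m c y hmodel hrank v hv j z hz1 hz2
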